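/- Let x be a transcendental real number and V ∈ ℚ with V > x²/2 > 0. Define A(m) = [m·x³/(6(V − x²/2))] in ℝ/G where G is the subgroup of ℝ generated by finitely many rationals q₁,…,q_s together with x. Then the map m ↦ A(m) from ℤ to ℝ/G is injective; in particular the element x³/(6(V − x²/2)) + G has infinite order in ℝ/G. -/
import Mathlib

lemma key_poly (x : ℝ) (hx : Transcendental ℚ x) (V : ℚ) (hV0 : V ≠ 0)
    (r : ℚ) (n m : ℤ)
    (h : (m : ℝ) * x ^ 3 = ((r : ℝ) + (n : ℝ) * x) * (6 * ((V : ℝ) - x ^ 2 / 2))) :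
    m = 0 := by
  by_contra hm
  set p : Polynomial ℚ :=
    Polynomial.C ((m : ℚ) + 3 * n) * Polynomial.X ^ 3 +
    Polynomial.C (3 * r) * Polynomial.X ^ 2 +
    Polynomial.C (-(6 * V * n)) * Polynomial.X + Polynomial.C (-(6 * V * r)) with hp
  have hc3 : p.coeff 3 = (m : ℚ) + 3 * n := by
    simp only [hp, Polynomial.coeff_add, Polynomial.coeff_C_mul, Polynomial.coeff_X_pow,
      Polynomial.coeff_C, Polynomial.coeff_X]
    norm_num
  have hc2 : p.coeff 2 = 3 * r := by
    simp only [hp, Polynomial.coeff_add, Polynomial.coeff_C_mul, Polynomial.coeff_X_pow,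
      Polynomial.coeff_C, Polynomial.coeff_X]
    norm_num
  have hc1 : p.coeff 1 = -(6 * V * n) := by
    simp only [hp, Polynomial.coeff_add, Polynomial.coeff_C_mul, Polynomial.coeff_X_pow,
      Polynomial.coeff_C, Polynomial.coeff_X]
    norm_num
  have hpne : p ≠ 0 := by
    intro h0
    have h2 : (3 : ℚ) * r = 0 := by rw [← hc2, h0, Polynomial.coeff_zero]
    have hr : r = 0 := by linarith
    have h1 : -(6 * V * (n : ℚ)) = 0 := by rw [← hc1, h0, Polynomial.coeff_zero]
    have h1' : (6 * V) * (n : ℚ) = 0 := by linarith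
    have hn : (n : ℚ) = 0 := by
      rcases mul_eq_zero.mp h1' with h' | h'
      · exfalso; apply hV0; linarith
      · exact h'
    have h3 : (m : ℚ) + 3 * n = 0 := by rw [← hc3, h0, Polynomial.coeff_zero]
    rw [hn] at h3
    have : (m : ℚ) = 0 := by linarith
    exact hm (by exact_mod_cast this)
  have haev : Polynomial.aeval x p = 0 := by
    simp only [hp, map_add, map_mul, map_pow, Polynomial.aeval_C, Polynomial.aeval_X,
      eq_ratCast]
    push_cast
    linear_combination h
  exact hx ⟨p, hpne, haev⟩

/-- for transcendental `x` and rational `V` with `V > x²/2 > 0`,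
the map `m ↦ [m · x³/(6(V − x²/2))]` from `ℤ` to `ℝ/G` is injective, where `G`
is the subgroup generated by the rationals `q₁,…,q_s` and `x`; in particular
the class of `x³/(6(V − x²/2))` has infinite order in `ℝ/G`. -/
theorem stmt_8 (x : ℝ) (hx : Transcendental ℚ x) (V : ℚ)
    (hV : (V : ℝ) > x ^ 2 / 2) (hx2 : x ^ 2 / 2 > 0) (s : ℕ) (q : Fin s → ℚ)
    (G : AddSubgroup ℝ)
    (hG : G = AddSubgroup.closure ((Set.range fun i => ((q i : ℝ))) ∪ {x})) :
    Function.Injective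
        (fun m : ℤ =>
          (QuotientAddGroup.mk ((m : ℝ) * (x ^ 3 / (6 * ((V : ℝ) - x ^ 2 / 2)))) :
            ℝ ⧸ G)) ∧
      ¬ IsOfFinAddOrder
          (QuotientAddGroup.mk (x ^ 3 / (6 * ((V : ℝ) - x ^ 2 / 2))) : ℝ ⧸ G) := by
  have hV0 : V ≠ 0 := by
    intro h; rw [h] at hV; push_cast at hV; linarith
  have hpos : (0:ℝ) < (V : ℝ) - x ^ 2 / 2 := by linarith
  have hden : 6 * ((V : ℝ) - x ^ 2 / 2) ≠ 0 := by positivity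
  set c : ℝ := x ^ 3 / (6 * ((V : ℝ) - x ^ 2 / 2)) with hc
  let S : AddSubgroup ℝ :=
    { carrier := {y | ∃ r : ℚ, ∃ n : ℤ, y = (r : ℝ) + (n : ℝ) * x}
      zero_mem' := ⟨0, 0, by simp⟩
      add_mem' := by
        rintro a b ⟨r1, n1, rfl⟩ ⟨r2, n2, rfl⟩
        exact ⟨r1 + r2, n1 + n2, by push_cast; ring⟩
      neg_mem' := by
        rintro a ⟨r, n, rfl⟩
        exact ⟨-r, -n, by push_cast; ring⟩ }
  have hGS : G ≤ S := by
    rw [hG]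
    apply (AddSubgroup.closure_le S).mpr
    rintro y (⟨i, rfl⟩ | rfl)
    · exact ⟨q i, 0, by simp⟩
    · exact ⟨0, 1, by simp⟩
  have hkey : ∀ m : ℤ, (m : ℝ) * c ∈ G → m = 0 := by
    intro m hm
    obtain ⟨r, n, hrn⟩ := hGS hm
    refine key_poly x hx V hV0 r n m ?_
    have h' : (m : ℝ) * x ^ 3 / (6 * ((V : ℝ) - x ^ 2 / 2)) = (r : ℝ) + (n : ℝ) * x := by
      rw [← hrn, hc]; ring
    rw [div_eq_iff hden] at h'
    exact h'
  have hinj : Function.Injective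
      (fun m : ℤ => (QuotientAddGroup.mk ((m : ℝ) * c) : ℝ ⧸ G)) := by
    intro m1 m2 h
    simp only [QuotientAddGroup.eq] at h
    have : ((m2 - m1 : ℤ) : ℝ) * c ∈ G := by
      convert h using 1; push_cast; ring
    have := hkey _ this
    omega
  refine ⟨hinj, ?_⟩
  intro hfin
  obtain ⟨n, hn0, hn⟩ := isOfFinAddOrder_iff_nsmul_eq_zero.mp hfin
  have heq : (fun m : ℤ => (QuotientAddGroup.mk ((m : ℝ) * c) : ℝ ⧸ G)) (n : ℤ) =
      (fun m : ℤ => (QuotientAddGroup.mk ((m : ℝ) * c) : ℝ ⧸ G)) 0 := by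
    simp only [Int.cast_natCast, Int.cast_zero, zero_mul]
    rw [show ((n : ℝ) * c) = n • c by simp [nsmul_eq_mul]]
    rw [QuotientAddGroup.mk_nsmul]
    simp [hn]
  have := hinj heq
  omega
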